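/- arXiv:2404.07905 — 3 statements merged into one kernel-verified Lean document; each statement's English description precedes it below -/
import Mathlib

section
/- Closed form for the bang-bang radius recursion: let 0 < |ξ| < 1, Δ = (1−|ξ|)/(1+|ξ|), R₁ ∈ [0,1), and define R_{k+1} = ((1+|ξ|²)R_k + 2|ξ|)/(2|ξ|R_k + 1+|ξ|²). Then for all k ≥ 0, R_{k+1} = ((1+Δ^{2k})R₁ + 1 − Δ^{2k})/((1−Δ^{2k})R₁ + 1 + Δ^{2k}). -/
open Complex

theorem bangbang_closed_form (ξ : ℂ) (h0 : 0 < ‖ξ‖) (h1 : ‖ξ‖ < 1)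
    (R : ℕ → ℝ) (hR1 : 0 ≤ R 1 ∧ R 1 < 1)
    (hrec : ∀ k : ℕ, 1 ≤ k →
      R (k + 1) = ((1 + ‖ξ‖ ^ 2) * R k + 2 * ‖ξ‖) /
        (2 * ‖ξ‖ * R k + 1 + ‖ξ‖ ^ 2)) :
    ∀ k : ℕ,
      R (k + 1) =
        ((1 + ((1 - ‖ξ‖) / (1 + ‖ξ‖)) ^ (2 * k)) * R 1 +
            1 - ((1 - ‖ξ‖) / (1 + ‖ξ‖)) ^ (2 * k)) /
          ((1 - ((1 - ‖ξ‖) / (1 + ‖ξ‖)) ^ (2 * k)) * R 1 +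
            1 + ((1 - ‖ξ‖) / (1 + ‖ξ‖)) ^ (2 * k)) := by
  obtain ⟨hR0, hR1'⟩ := hR1
  set a := ‖ξ‖ with ha
  have h1a : (0:ℝ) < 1 + a := by linarith
  have h1a' : (0:ℝ) < 1 - a := by linarith
  have hd0 : 0 < (1 - a) / (1 + a) := div_pos h1a' h1a
  have hd1 : (1 - a) / (1 + a) < 1 := by
    rw [div_lt_one h1a]; linarith
  intro k
  induction k with
  | zero =>
    norm_num
  | succ k ih =>
    have e1 : ((1 - a) / (1 + a)) ^ (2*(k+1))
        = (1 - a)^2 / (1 + a)^2 * ((1 - a) / (1 + a)) ^ (2*k) := by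
      rw [show 2*(k+1) = 2*k + 2 by ring, pow_add]
      field_simp
    rw [hrec (k+1) (by omega), ih, e1]
    set D := ((1 - a) / (1 + a)) ^ (2*k) with hDset
    have hDpos : 0 < D := pow_pos hd0 _
    have hD1 : D ≤ 1 := pow_le_one₀ hd0.le hd1.le
    have hDen : 0 < (1 - D) * R 1 + 1 + D := by nlinarith
    have hNum : 0 ≤ (1 + D) * R 1 + 1 - D := by nlinarith
    have hX : 0 ≤ ((1 + D) * R 1 + 1 - D) / ((1 - D) * R 1 + 1 + D) :=
      div_nonneg hNum hDen.le
    have hB : 0 < 2*a*(((1 + D) * R 1 + 1 - D) / ((1 - D) * R 1 + 1 + D)) + 1 + a^2 := by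
      nlinarith
    have hd2pos : 0 < (1 - a)^2 / (1 + a)^2 * D :=
      mul_pos (div_pos (pow_pos h1a' 2) (pow_pos h1a 2)) hDpos
    have hd2le : (1 - a)^2 / (1 + a)^2 * D ≤ 1 := by
      have : (1 - a)^2 / (1 + a)^2 < 1 := by
        rw [div_lt_one (pow_pos h1a 2)]; nlinarith
      nlinarith
    have hDen' : 0 < (1 - (1 - a)^2 / (1 + a)^2 * D) * R 1 + 1 + (1 - a)^2 / (1 + a)^2 * D := by
      nlinarith
    rw [div_eq_div_iff hB.ne' hDen'.ne']
    field_simp [hDen.ne', show R 1 * (1 - D) + 1 + D ≠ 0 by nlinarith]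
    ring
end

section
/- With the closed form above, R_k → 1 as k → ∞, and 1 − R_{k+1} = 2((1−R₁)/((1−Δ^{2k})R₁+1+Δ^{2k}))·Δ^{2k}, so (1 − R_{k+1})/Δ^{2k} → 2(1−R₁)/(1+R₁). -/
open Filter Topology

theorem bangbang_asymptotics (Δ R₁ : ℝ) (hΔ0 : 0 < Δ) (hΔ1 : Δ < 1)
    (hR0 : 0 ≤ R₁) (hR1 : R₁ < 1) (R : ℕ → ℝ)
    (hR : ∀ k : ℕ,
      R (k + 1) = ((1 + Δ ^ (2 * k)) * R₁ + 1 - Δ ^ (2 * k)) /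
        ((1 - Δ ^ (2 * k)) * R₁ + 1 + Δ ^ (2 * k))) :
    Tendsto R atTop (𝓝 1) ∧
    (∀ k : ℕ, 1 - R (k + 1) =
      2 * ((1 - R₁) / ((1 - Δ ^ (2 * k)) * R₁ + 1 + Δ ^ (2 * k))) * Δ ^ (2 * k)) ∧
    Tendsto (fun k : ℕ => (1 - R (k + 1)) / Δ ^ (2 * k)) atTop
      (𝓝 (2 * (1 - R₁) / (1 + R₁))) := by
  have hple : ∀ k : ℕ, Δ ^ (2 * k) ≤ 1 := fun k =>
    pow_le_one₀ hΔ0.le hΔ1.le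
  have hppos : ∀ k : ℕ, 0 < Δ ^ (2 * k) := fun k => pow_pos hΔ0 _
  have hd : ∀ k : ℕ, 0 < (1 - Δ ^ (2 * k)) * R₁ + 1 + Δ ^ (2 * k) := by
    intro k
    nlinarith [hple k, hppos k]
  have hpow : Tendsto (fun k : ℕ => Δ ^ (2 * k)) atTop (𝓝 0) := by
    have : Tendsto (fun k : ℕ => (Δ ^ 2) ^ k) atTop (𝓝 0) := by
      apply tendsto_pow_atTop_nhds_zero_of_lt_one (by positivity)
      nlinarith
    simpa [pow_mul] using this
  have hc : Tendsto (fun _ : ℕ => R₁ + 1) atTop (𝓝 (R₁ + 1)) := tendsto_const_nhds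
  have hdlim : Tendsto (fun k : ℕ => (1 - Δ ^ (2 * k)) * R₁ + 1 + Δ ^ (2 * k))
      atTop (𝓝 (R₁ + 1)) := by
    have h := hc.add (hpow.const_mul (1 - R₁))
    simp only [mul_zero, add_zero] at h
    exact h.congr fun k => by ring
  have hR1pos : (0:ℝ) < R₁ + 1 := by linarith
  have hnlim : Tendsto (fun k : ℕ => (1 + Δ ^ (2 * k)) * R₁ + 1 - Δ ^ (2 * k))
      atTop (𝓝 (R₁ + 1)) := by
    have h := hc.add (hpow.const_mul (R₁ - 1))
    simp only [mul_zero, add_zero] at h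
    exact h.congr fun k => by ring
  have hRlim : Tendsto (fun k : ℕ => R (k + 1)) atTop (𝓝 1) := by
    have := hnlim.div hdlim hR1pos.ne'
    rw [div_self hR1pos.ne'] at this
    refine this.congr fun k => ?_
    simp [Pi.div_apply, hR k]
  have hid : ∀ k : ℕ, 1 - R (k + 1) =
      2 * ((1 - R₁) / ((1 - Δ ^ (2 * k)) * R₁ + 1 + Δ ^ (2 * k))) * Δ ^ (2 * k) := by
    intro k
    rw [hR k]
    have hDI : ((1 - Δ ^ (2 * k)) * R₁ + 1 + Δ ^ (2 * k)) *
        ((1 - Δ ^ (2 * k)) * R₁ + 1 + Δ ^ (2 * k))⁻¹ = 1 := mul_inv_cancel₀ (hd k).ne'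
    rw [div_eq_mul_inv, div_eq_mul_inv]
    linear_combination (-1 : ℝ) * hDI
  refine ⟨?_, hid, ?_⟩
  · rwa [← tendsto_add_atTop_iff_nat 1]
  · have : Tendsto (fun k : ℕ => 2 * (1 - R₁) / ((1 - Δ ^ (2 * k)) * R₁ + 1 + Δ ^ (2 * k)))
        atTop (𝓝 (2 * (1 - R₁) / (R₁ + 1))) := by
      exact tendsto_const_nhds.div hdlim hR1pos.ne'
    rw [show (1 + R₁) = R₁ + 1 by ring]
    refine this.congr fun k => ?_
    rw [hid k]
    field_simp [(hd k).ne', (hppos k).ne']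
end

section
/- Adiabatic path is a circle: let ω, b ∈ ℝ with 0 < |b| and let α ∈ ℂ with Im(α) = b and ω² > |α|². Then the fixed points ξ_± = (ω ± √(ω² − |α|²))/α satisfy |ξ_± + iω/b|² = ω²/b² − 1. In particular ξ_± lie on the circle with center −iω/b and radius √(ω²/b² − 1). -/
open Complex

private lemma circle_aux (ω b : ℝ) (hb : b ≠ 0) (α : ℂ) (him : α.im = b) (ha : α ≠ 0)
    (s : ℝ) (hs : s^2 = ω^2 - (α.re^2 + b^2)) :
    ‖((ω : ℂ) + (s:ℂ)) / α + Complex.I * (ω : ℂ) / (b : ℂ)‖ ^ 2 = ω^2/b^2 - 1 := by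
  have hb0 : (b:ℂ) ≠ 0 := Complex.ofReal_ne_zero.mpr hb
  have hα : α = (α.re:ℂ) + (b:ℂ)*Complex.I := by rw [← him]; exact (Complex.re_add_im α).symm
  have hz : ((ω : ℂ) + (s:ℂ)) / α + Complex.I * (ω : ℂ) / (b : ℂ)
      = (((s*b : ℝ):ℂ) + ((ω*α.re : ℝ):ℂ)*Complex.I)/(α*b) := by
    rw [hα] at ha ⊢
    field_simp
    ring_nf
    simp [Complex.I_sq]
    ring
  rw [hz, norm_div, norm_mul, div_pow, mul_pow, Complex.sq_norm, Complex.sq_norm,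
    Complex.normSq_add_mul_I, Complex.normSq_apply, him]
  rw [Complex.norm_real, Real.norm_eq_abs, _root_.sq_abs]
  have h4 : (ω^2/b^2 - 1 : ℝ) = (ω^2 - b^2)/b^2 := by field_simp
  have hd : (α.re*α.re + b*b)*b^2 ≠ 0 := by
    apply mul_ne_zero _ (pow_ne_zero 2 hb)
    nlinarith [mul_self_nonneg α.re, mul_self_pos.mpr hb]
  rw [h4, div_eq_div_iff hd (pow_ne_zero 2 hb)]
  linear_combination b^4 * hs

theorem adiabatic_path_circle (ω b : ℝ) (hb : b ≠ 0) (α : ℂ) (him : α.im = b)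
    (hst : ‖α‖ ^ 2 < ω ^ 2) :
    ‖((ω : ℂ) + (Real.sqrt (ω ^ 2 - ‖α‖ ^ 2) : ℂ)) / α +
        Complex.I * (ω : ℂ) / (b : ℂ)‖ ^ 2 = ω ^ 2 / b ^ 2 - 1 ∧
    ‖((ω : ℂ) - (Real.sqrt (ω ^ 2 - ‖α‖ ^ 2) : ℂ)) / α +
        Complex.I * (ω : ℂ) / (b : ℂ)‖ ^ 2 = ω ^ 2 / b ^ 2 - 1 := by
  have ha : α ≠ 0 := by
    intro h
    apply hb
    rw [← him, h, Complex.zero_im]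
  have habs : ‖α‖ ^ 2 = α.re ^ 2 + b ^ 2 := by
    rw [Complex.sq_norm, Complex.normSq_apply, him]; ring
  set s := Real.sqrt (ω ^ 2 - ‖α‖ ^ 2) with hsdef
  have hs : s ^ 2 = ω ^ 2 - (α.re ^ 2 + b ^ 2) := by
    rw [hsdef, Real.sq_sqrt (by linarith), habs]
  have hs' : (-s) ^ 2 = ω ^ 2 - (α.re ^ 2 + b ^ 2) := by rw [neg_pow]; simpa using hs
  constructor
  · exact circle_aux ω b hb α him ha s hs
  · have := circle_aux ω b hb α him ha (-s) hs'
    push_cast at this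
    rw [← sub_eq_add_neg] at this
    exact this
end
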